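/- (Lemma 'recursive', main identity.) With notation as in the context, for every n ≥ 2 one has γ_n = q_n·Φ + β^{n−1}·α^{−(n−1)}·γ₁ in R. (In the paper this reads: for all n ≥ 2, γ_n = q_nΦ + (p^{(n−1)(k−1)}/α^{n−1})·γ₁ in the group ring O_𝔭[𝒢(n)].) -/

import Mathlib

/-!
Both sides of the identity, shifted by one index, solve the linear recurrence
`u (n + 2) = a * u (n + 1) - β * u n`, whose characteristic polynomial has the roots `α` and
`λ = β α⁻¹`. The sequence `β ^ n α⁻ⁿ = λ ^ n` is the geometric solution for `λ`, and
`q (n + 1) = α ^ (n + 1) ∑_{j < n} (β α⁻²) ^ j` solves it by a telescoping computation.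
So the identity only has to be checked at `n = 1`, where it is trivial since `q 1 = 0`, and at
`n = 2`, where it is the factorisation `α² Φ = (α - t s) (α - t s̄)`, using `s s̄ = 1`.
-/

open Finset

namespace LinearRecurrence

variable {R : Type*} [CommRing R]

def secondOrder (a b : R) : LinearRecurrence R := ⟨2, ![-b, a]⟩

theorem isSolution_secondOrder_iff {a b : R} {u : ℕ → R} :
    (secondOrder a b).IsSolution u ↔ ∀ n, u (n + 2) = a * u (n + 1) - b * u n := by
  show (∀ n, u (n + 2) = ∑ i : Fin 2, ![-b, a] i * u (n + i)) ↔ _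
  simp only [Fin.sum_univ_two, Matrix.cons_val_zero, Matrix.cons_val_one,
    Fin.val_zero, Fin.val_one, add_zero, neg_mul, neg_add_eq_sub]

theorem eq_of_isSolution_secondOrder {a b : R} {u v : ℕ → R}
    (hu : (secondOrder a b).IsSolution u) (hv : (secondOrder a b).IsSolution v)
    (h₀ : u 0 = v 0) (h₁ : u 1 = v 1) : u = v := by
  refine ((secondOrder a b).eq_iff_eqOn_range_order u v hu hv).2 fun n hn => ?_
  simp only [secondOrder, coe_range, Set.mem_Iio] at hn
  interval_cases n <;> assumption

variable (α : Rˣ) (β : R)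

theorem isSolution_pow_mul_inv_pow :
    (secondOrder (α + β * ↑α⁻¹) β).IsSolution fun n => β ^ n * (↑α⁻¹ : R) ^ n := by
  refine isSolution_secondOrder_iff.2 fun n => ?_
  linear_combination (-β ^ (n + 1) * (↑α⁻¹ : R) ^ n) * α.mul_inv

theorem isSolution_pow_mul_geom_sum :
    (secondOrder (α + β * ↑α⁻¹) β).IsSolution
      fun n => (α : R) ^ (n + 1) * ∑ j ∈ range n, (β * (↑α⁻¹ : R) ^ 2) ^ j := by
  refine isSolution_secondOrder_iff.2 fun n => ?_
  simp only [sum_range_succ]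
  linear_combination (β * (α : R) ^ (n + 2) * ↑α⁻¹ * (β * (↑α⁻¹ : R) ^ 2) ^ n
    - β * (α : R) ^ (n + 1) * ∑ j ∈ range n, (β * (↑α⁻¹ : R) ^ 2) ^ j) * α.mul_inv

end LinearRecurrence

open LinearRecurrence

/-- Lemma `recursive`: for all `n ≥ 2`,
`γ n = q n · Φ + β^(n-1) · α^(-(n-1)) · γ 1`. -/
theorem gamma_eq_q_mul_phi {R : Type*} [CommRing R] (p t : R) (α : Rˣ) (s s' : R)
    (hss : s * s' = 1) (γ : ℕ → R)
    (hγ1 : γ 1 = ((α : R) + p * t ^ 2 * ((α⁻¹ : Rˣ) : R)) - t * (s + s'))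
    (hγ2 : γ 2 = ((α : R) + p * t ^ 2 * ((α⁻¹ : Rˣ) : R)) * γ 1 - t ^ 2 * (p - 1))
    (hγrec : ∀ n, 3 ≤ n →
      γ n = ((α : R) + p * t ^ 2 * ((α⁻¹ : Rˣ) : R)) * γ (n - 1) - p * t ^ 2 * γ (n - 2))
    (n : ℕ) (hn : 2 ≤ n) :
    γ n = ((α : R) ^ n * ∑ j ∈ Finset.range (n - 1), (p * t ^ 2 * ((α⁻¹ : Rˣ) : R) ^ 2) ^ j) *
        ((1 - t * s * ((α⁻¹ : Rˣ) : R)) * (1 - t * s' * ((α⁻¹ : Rˣ) : R))) +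
      (p * t ^ 2) ^ (n - 1) * ((α⁻¹ : Rˣ) : R) ^ (n - 1) * γ 1 := by
  set Φ := (1 - t * s * ((α⁻¹ : Rˣ) : R)) * (1 - t * s' * ((α⁻¹ : Rˣ) : R))
  set q := fun m =>
    (α : R) ^ (m + 1) * ∑ j ∈ range m, (p * t ^ 2 * ((α⁻¹ : Rˣ) : R) ^ 2) ^ j
  set geom := fun m => (p * t ^ 2) ^ m * ((α⁻¹ : Rˣ) : R) ^ m
  have hγ : (secondOrder (α + p * t ^ 2 * ↑α⁻¹) (p * t ^ 2)).IsSolution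
      fun m => γ (m + 1) :=
    isSolution_secondOrder_iff.2 fun m => hγrec (m + 3) (by omega)
  have hrhs : (secondOrder (α + p * t ^ 2 * ↑α⁻¹) (p * t ^ 2)).IsSolution
      fun m => q m * Φ + geom m * γ 1 := by
    have hq := isSolution_secondOrder_iff.1 (isSolution_pow_mul_geom_sum α (p * t ^ 2))
    have hgeom := isSolution_secondOrder_iff.1 (isSolution_pow_mul_inv_pow α (p * t ^ 2))
    exact isSolution_secondOrder_iff.2 fun m => by linear_combination Φ * hq m + γ 1 * hgeom m
  have h₂ : γ 2 = q 1 * Φ + geom 1 * γ 1 := by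
    simp only [q, geom, Φ, sum_range_one, pow_zero, pow_one, mul_one, hγ2, hγ1]
    linear_combination (p * t ^ 2 + (α : R) * t * (s + s') - t ^ 2 * s * s'
      - (α : R) * ↑α⁻¹ * t ^ 2 * s * s') * α.mul_inv - t ^ 2 * hss
  have key := eq_of_isSolution_secondOrder hγ hrhs (by simp [q, geom]) h₂
  obtain ⟨m, rfl⟩ : ∃ m, n = m + 1 := ⟨n - 1, by omega⟩
  simpa only [Nat.add_sub_cancel, q, geom] using congrFun key m
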